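/- Consider the objective function f : ℝ^7 → ℝ given by f(x) = (1/2)(∑_{j=1}^7 x_j)² + ∑_{j=1}^7 x_j, the feasible set F₁ = {x ∈ ℝ^7 : x_1 = x_2, x_3 = x_4 = x_5 = x_6 = x_7, ∑_{j=1}^7 x_j = 6, 0 ≤ x_j ≤ 3 and x_j ∈ ℤ for all j}, and the feasible set F₂ = {x ∈ ℝ^7 : x_1 = x_2 = x_3, x_4 = x_5 = x_6 = x_7, ∑_{j=1}^7 x_j = 6, 0 ≤ x_j ≤ 3 and x_j ∈ ℤ for all j}. Then both problems are feasible, the minimum of f over F₁ equals the minimum of f over F₂ (both equal 24), and the set of minimizers of f over F₁ is disjoint from the set of minimizers of f over F₂. -/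
import Mathlib


/-- The objective function `f(x) = (1/2)(∑ x_j)² + ∑ x_j` on `ℝ^7`. -/
noncomputable def f7 (x : Fin 7 → ℝ) : ℝ := (1 / 2) * (∑ j, x j) ^ 2 + ∑ j, x j

/-- The feasible set of the first MI-LCQP instance:
`x₁ = x₂`, `x₃ = x₄ = x₅ = x₆ = x₇`, `∑ x_j = 6`, `0 ≤ x_j ≤ 3`, `x_j ∈ ℤ`. -/
def F1 : Set (Fin 7 → ℝ) :=
  {x | x 0 = x 1 ∧ x 2 = x 3 ∧ x 3 = x 4 ∧ x 4 = x 5 ∧ x 5 = x 6 ∧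
    x 0 + x 1 + x 2 + x 3 + x 4 + x 5 + x 6 = 6 ∧
    (∀ j, 0 ≤ x j ∧ x j ≤ 3) ∧ (∀ j, ∃ k : ℤ, x j = k)}

/-- The feasible set of the second MI-LCQP instance:
`x₁ = x₂ = x₃`, `x₄ = x₅ = x₆ = x₇`, `∑ x_j = 6`, `0 ≤ x_j ≤ 3`, `x_j ∈ ℤ`. -/
def F2 : Set (Fin 7 → ℝ) :=
  {x | x 0 = x 1 ∧ x 1 = x 2 ∧ x 3 = x 4 ∧ x 4 = x 5 ∧ x 5 = x 6 ∧
    x 0 + x 1 + x 2 + x 3 + x 4 + x 5 + x 6 = 6 ∧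
    (∀ j, 0 ≤ x j ∧ x j ≤ 3) ∧ (∀ j, ∃ k : ℤ, x j = k)}

lemma f7_const (x : Fin 7 → ℝ)
    (hx : x 0 + x 1 + x 2 + x 3 + x 4 + x 5 + x 6 = 6) : f7 x = 24 := by
  unfold f7
  rw [Fin.sum_univ_seven, hx]
  norm_num

lemma w1_mem : (![3, 3, 0, 0, 0, 0, 0] : Fin 7 → ℝ) ∈ F1 := by
  refine ⟨rfl, rfl, rfl, rfl, rfl, by norm_num [show ∀ i : Fin 7, (![3, 3, 0, 0, 0, 0, 0] : Fin 7 → ℝ) i = ![3, 3, 0, 0, 0, 0, 0] i from fun i => rfl, show ((![3, 3, 0, 0, 0, 0, 0] : Fin 7 → ℝ) 0) = 3 from rfl, show ((![3, 3, 0, 0, 0, 0, 0] : Fin 7 → ℝ) 1) = 3 from rfl, show ((![3, 3, 0, 0, 0, 0, 0] : Fin 7 → ℝ) 2) = 0 from rfl, show ((![3, 3, 0, 0, 0, 0, 0] : Fin 7 → ℝ) 3) = 0 from rfl, show ((![3, 3, 0, 0, 0, 0, 0] : Fin 7 → ℝ) 4) = 0 from rfl, show ((![3, 3, 0, 0, 0,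 0, 0] : Fin 7 → ℝ) 5) = 0 from rfl, show ((![3, 3, 0, 0, 0, 0, 0] : Fin 7 → ℝ) 6) = 0 from rfl], fun j => ?_, fun j => ?_⟩
  · fin_cases j <;> norm_num
  · fin_cases j
    · exact ⟨3, rfl⟩
    · exact ⟨3, rfl⟩
    all_goals exact ⟨0, by rw [Int.cast_zero]; rfl⟩

lemma w2_mem : (![2, 2, 2, 0, 0, 0, 0] : Fin 7 → ℝ) ∈ F2 := by
  refine ⟨rfl, rfl, rfl, rfl, rfl, by norm_num [show ((![2, 2, 2, 0, 0, 0, 0] : Fin 7 → ℝ) 0) = 2 from rfl, show ((![2, 2, 2, 0, 0, 0, 0] : Fin 7 → ℝ) 1) = 2 from rfl, show ((![2, 2, 2, 0, 0, 0, 0] : Fin 7 → ℝ) 2) = 2 from rfl, show ((![2, 2, 2, 0, 0, 0, 0] : Fin 7 → ℝ) 3) = 0 from rfl, show ((![2, 2, 2, 0, 0, 0, 0] : Fin 7 → ℝ) 4) = 0 from rfl, show ((![2, 2, 2, 0, 0, 0, 0] : Fin 7 → ℝ) 5) = 0 from rfl, show ((![2, 2, 2, 0, 0, 0, 0] : Fin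 7 → ℝ) 6) = 0 from rfl], fun j => ?_, fun j => ?_⟩
  · fin_cases j <;> norm_num
  · fin_cases j
    · exact ⟨2, rfl⟩
    · exact ⟨2, rfl⟩
    · exact ⟨2, rfl⟩
    all_goals exact ⟨0, by rw [Int.cast_zero]; rfl⟩

/-- Both problems are feasible, the minimum of `f` over `F₁` equals the minimum of `f`
over `F₂` (both equal `24`), and the two sets of minimizers are disjoint. -/
theorem same_min_disjoint_minimizers :
    F1.Nonempty ∧ F2.Nonempty ∧
    IsLeast (f7 '' F1) 24 ∧ IsLeast (f7 '' F2) 24 ∧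
    Disjoint {x ∈ F1 | ∀ y ∈ F1, f7 x ≤ f7 y} {x ∈ F2 | ∀ y ∈ F2, f7 x ≤ f7 y} := by
  refine ⟨⟨_, w1_mem⟩, ⟨_, w2_mem⟩, ?_, ?_, ?_⟩
  · refine ⟨⟨_, w1_mem, f7_const _ w1_mem.2.2.2.2.2.1⟩, ?_⟩
    rintro _ ⟨y, hy, rfl⟩
    rw [f7_const y hy.2.2.2.2.2.1]
  · refine ⟨⟨_, w2_mem, f7_const _ w2_mem.2.2.2.2.2.1⟩, ?_⟩
    rintro _ ⟨y, hy, rfl⟩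
    rw [f7_const y hy.2.2.2.2.2.1]
  · rw [Set.disjoint_left]
    rintro x ⟨h1, -⟩ ⟨h2, -⟩
    obtain ⟨e01, e23, e34, e45, e56, hs, -, hint⟩ := h1
    obtain ⟨-, e12, -⟩ := h2
    obtain ⟨k, hk⟩ := hint 0
    have : (7 : ℝ) * k = 6 := by
      have : x 0 + x 1 + x 2 + x 3 + x 4 + x 5 + x 6 = 7 * x 0 := by
        rw [← e56, ← e45, ← e34, ← e23, ← e12, ← e01]; ring
      rw [this, hk] at hs
      linarith
    have : (7 : ℤ) * k = 6 := by exact_mod_cast this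
    omega
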